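/- arXiv:1405.3365 — 5 statements merged into one kernel-verified Lean document; each statement's English description precedes it below -/
import Mathlib

section
/- Let KB = (L, Π) be an FOL-program and I ⊆ Lit_Π. If U₁ ⊆ HB_Π and U₂ ⊆ HB_Π are both unfounded sets of KB relative to I, then U₁ ∪ U₂ is an unfounded set of KB relative to I. -/
/-!
Formalization of FOL-programs (combined knowledge bases `KB = (L, Π)` of a
first-order theory and a ground rule base) and their well-founded semantics.

* The Herbrand base `HB_Π` is modelled as a type `Atom`; each atom `a` has an
  associated first-order sentence `toSent a`, and `inOmega a` says whether the
  predicate symbol of `a` is in the shared set `Ω` (atoms with `¬ inOmega a`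
  are the *ordinary* atoms).
* The field `atomic` expresses that atoms are genuinely atomic ground
  sentences: every consistent set of literals is a satisfiable theory.
* Literals `Lit Atom = Atom ⊕ Atom`: `Sum.inl a` is the atom `a`,
  `Sum.inr a` is the negated atom `¬ a`.
-/

open FirstOrder

namespace FOLProg

variable {L : FirstOrder.Language} {Atom : Type*}

/-- Literals over the Herbrand base: `Sum.inl a` is `a`, `Sum.inr a` is `¬ a`. -/
abbrev Lit (Atom : Type*) := Atom ⊕ Atom

/-- A body element of a rule: an atom of the Herbrand base, or an FOL sentence. -/
inductive BElem (L : FirstOrder.Language) (Atom : Type*) where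
  | atom : Atom → BElem L Atom
  | fol : L.Sentence → BElem L Atom

/-- A ground rule `head ← pos, not neg`. -/
structure Rule (L : FirstOrder.Language) (Atom : Type*) where
  head : Atom
  pos : Set (BElem L Atom)
  neg : Set (BElem L Atom)

/-- `S⁺`. -/
def litPos (S : Set (Lit Atom)) : Set Atom := {a | Sum.inl a ∈ S}

/-- `S⁻`. -/
def litNeg (S : Set (Lit Atom)) : Set Atom := {a | Sum.inr a ∈ S}

/-- A set of literals is consistent: `S⁺ ∩ S⁻ = ∅`. -/
def LitConsistent (S : Set (Lit Atom)) : Prop := litPos S ∩ litNeg S = ∅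

/-- The theory of *all* literals of `S` (positive atoms as their sentences,
negative ones negated). -/
def litTheory (toSent : Atom → L.Sentence) (S : Set (Lit Atom)) : L.Theory :=
  toSent '' litPos S ∪ (fun a => (toSent a).not) '' litNeg S

/-- An FOL-program `KB = (L, Π)` over the Herbrand base `Atom`. -/
structure KB (L : FirstOrder.Language) (Atom : Type*) where
  /-- the first-order theory `L` -/
  theory : L.Theory
  /-- the first-order sentence of each ground atom of the Herbrand base -/
  toSent : Atom → L.Sentence
  /-- whether the predicate symbol of an atom belongs to `Ω` -/
  inOmega : Atom → Prop
  /-- the rule base `Π` -/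
  rules : Set (Rule L Atom)
  /-- atoms are atomic: any consistent set of ground literals is satisfiable -/
  atomic : ∀ S : Set (Lit Atom), LitConsistent S → (litTheory toSent S).IsSatisfiable

namespace KB

variable (kb : KB L Atom)

/-- `S|_Ω`, as a first-order theory. -/
def restrict (S : Set (Lit Atom)) : L.Theory :=
  kb.toSent '' {a | Sum.inl a ∈ S ∧ kb.inOmega a} ∪
    (fun a => (kb.toSent a).not) '' {a | Sum.inr a ∈ S ∧ kb.inOmega a}

/-- The theory `L ∪ S|_Ω`. -/
def extTheory (S : Set (Lit Atom)) : L.Theory := kb.theory ∪ kb.restrict S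

/-- `S` is consistent with `L` (equivalently, `S ∪ L` is consistent):
`S` is a consistent set of literals and `L ∪ S|_Ω` is satisfiable. -/
def ConsistentWith (S : Set (Lit Atom)) : Prop :=
  LitConsistent S ∧ (kb.extTheory S).IsSatisfiable

/-- The FOL-formulas among a set of body elements, as sentences: the explicit
FOL-formulas together with the (sentences of the) non-ordinary atoms. -/
def folOf (s : Set (BElem L Atom)) : Set L.Sentence :=
  {φ | BElem.fol φ ∈ s} ∪ kb.toSent '' {a | BElem.atom a ∈ s ∧ kb.inOmega a}

/-- Conditions (a) and (b) of the definition of an unfounded set `U` of `KB`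
relative to a set of literals `I` (the case where `I ∪ L` is consistent). -/
def UnfoundedCond (I : Set (Lit Atom)) (U : Set Atom) : Prop :=
  ∀ H ∈ U,
    (∀ r ∈ kb.rules, r.head = H →
      -- (i) `¬A ∈ I ∪ ¬.U` for some ordinary atom `A ∈ pos(r)`
      (∃ a, BElem.atom a ∈ r.pos ∧ ¬ kb.inOmega a ∧ (Sum.inr a ∈ I ∨ a ∈ U)) ∨
      -- (ii) `B ∈ I` for some ordinary atom `B ∈ neg(r)`
      (∃ b, BElem.atom b ∈ r.neg ∧ ¬ kb.inOmega b ∧ Sum.inl b ∈ I) ∨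
      -- (iii) some FOL-formula `A ∈ pos(r)` is not entailed under any
      -- consistent extension of `I ∪ ¬.U`
      (∃ φ ∈ kb.folOf r.pos, ∀ S : Set (Lit Atom), LitConsistent S →
        I ∪ Sum.inr '' U ⊆ S → ¬ kb.extTheory S ⊨ᵇ φ) ∨
      -- (iv) some FOL-formula `A ∈ neg(r)` with `L ∪ I|_Ω ⊨ A`
      (∃ φ ∈ kb.folOf r.neg, kb.extTheory I ⊨ᵇ φ)) ∧
    -- (b) `L ∪ S|_Ω ⊭ H` for all consistent `S ⊇ I ∪ ¬.U`
    (∀ S : Set (Lit Atom), LitConsistent S → I ∪ Sum.inr '' U ⊆ S →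
      ¬ kb.extTheory S ⊨ᵇ kb.toSent H)

/-- `U` is an unfounded set of `KB` relative to `I`.  If `I ∪ L` is
inconsistent, the unfounded set is (by definition) the whole Herbrand base. -/
def IsUnfounded (I : Set (Lit Atom)) (U : Set Atom) : Prop :=
  (kb.ConsistentWith I ∧ kb.UnfoundedCond I U) ∨
    (¬ kb.ConsistentWith I ∧ U = Set.univ)

/-- The consequence operator `T_KB`. -/
def TOp (I : Set (Lit Atom)) : Set Atom :=
  {H | ¬ kb.ConsistentWith I ∨
    -- (a) some rule `r` with `head(r) = H` whose body holds
    (∃ r ∈ kb.rules, r.head = H ∧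
      (∀ a, BElem.atom a ∈ r.pos → ¬ kb.inOmega a → Sum.inl a ∈ I) ∧
      (∀ a, BElem.atom a ∈ r.neg → ¬ kb.inOmega a → Sum.inr a ∈ I) ∧
      (∀ φ ∈ kb.folOf r.pos, kb.extTheory I ⊨ᵇ φ) ∧
      (∀ φ ∈ kb.folOf r.neg, ∀ S : Set (Lit Atom), LitConsistent S → I ⊆ S →
        ¬ kb.extTheory S ⊨ᵇ φ)) ∨
    -- (b) `L ∪ I|_Ω ⊨ H`
    kb.extTheory I ⊨ᵇ kb.toSent H}

/-- `U_KB(I)`: the greatest unfounded set of `KB` relative to `I`, i.e. the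
union of all unfounded sets of `KB` relative to `I`. -/
def UOp (I : Set (Lit Atom)) : Set Atom := ⋃₀ {U | kb.IsUnfounded I U}

/-- `Z_KB(I) = {A ∈ HB_Π | L ∪ I|_Ω ⊨ ¬A}`: direct negative consequences. -/
def ZOp (I : Set (Lit Atom)) : Set Atom :=
  {a | kb.extTheory I ⊨ᵇ (kb.toSent a).not}

/-- `W_KB(I) = T_KB(I) ∪ ¬.U_KB(I) ∪ ¬.Z_KB(I)`. -/
def WOp (I : Set (Lit Atom)) : Set (Lit Atom) :=
  Sum.inl '' kb.TOp I ∪ Sum.inr '' kb.UOp I ∪ Sum.inr '' kb.ZOp I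

/-- The well-founded semantics of `KB`: the least fixpoint of `W_KB`
(by Knaster–Tarski, the intersection of all prefixed points). -/
def wfs : Set (Lit Atom) := sInf {I | kb.WOp I ⊆ I}

/-! ### Standard notions for normal logic programs -/

/-- `KB = (∅, Π)` is a normal logic program: the first-order theory is empty
and every rule has only ordinary atoms in its head and body (hence `Ω = ∅`). -/
def IsNormal : Prop :=
  kb.theory = ∅ ∧ (∀ a : Atom, ¬ kb.inOmega a) ∧
    ∀ r ∈ kb.rules, ∀ e ∈ r.pos ∪ r.neg, ∃ a, e = BElem.atom a

/-- The standard immediate-consequence operator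
`T_Π(S) = {head(r) | r ∈ Π, pos(r) ∪ ¬.neg(r) ⊆ S}` of a normal program. -/
def StdT (S : Set (Lit Atom)) : Set Atom :=
  {H | ∃ r ∈ kb.rules, r.head = H ∧
    (∀ a, BElem.atom a ∈ r.pos → Sum.inl a ∈ S) ∧
    (∀ a, BElem.atom a ∈ r.neg → Sum.inr a ∈ S)}

/-- `U` is an unfounded set of the normal program `Π` w.r.t. `S` in the
standard sense. -/
def StdUnfounded (S : Set (Lit Atom)) (U : Set Atom) : Prop :=
  ∀ a ∈ U, ∀ r ∈ kb.rules, r.head = a →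
    (∃ b, BElem.atom b ∈ r.pos ∧ (Sum.inr b ∈ S ∨ b ∈ U)) ∨
    (∃ b, BElem.atom b ∈ r.neg ∧ Sum.inl b ∈ S)

/-- `U_Π(S)`: the greatest standard unfounded set of `Π` w.r.t. `S`. -/
def StdU (S : Set (Lit Atom)) : Set Atom := ⋃₀ {U | kb.StdUnfounded S U}

/-- `W_Π(S) = T_Π(S) ∪ ¬.U_Π(S)`. -/
def StdW (S : Set (Lit Atom)) : Set (Lit Atom) :=
  Sum.inl '' kb.StdT S ∪ Sum.inr '' kb.StdU S

/-- The standard well-founded semantics `lfp(W_Π)` of the normal program `Π`. -/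
def stdWfs : Set (Lit Atom) := sInf {S | kb.StdW S ⊆ S}

/-! ### Two-valued satisfaction and well-supported answer sets -/

/-- The theory `L ∪ I|_Ω ∪ ¬.Ī|_Ω` of a total interpretation `I ⊆ HB_Π`. -/
def totTheory (I : Set Atom) : L.Theory :=
  kb.theory ∪ kb.toSent '' {a | a ∈ I ∧ kb.inOmega a} ∪
    (fun a => (kb.toSent a).not) '' {a | a ∉ I ∧ kb.inOmega a}

/-- `I ⊨_L e` for a total interpretation `I` and a body element `e`:
membership for ordinary atoms, entailment from `L ∪ I|_Ω ∪ ¬.Ī|_Ω` for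
FOL-formulas (including non-ordinary atoms). -/
def sat2 (I : Set Atom) : BElem L Atom → Prop
  | .atom a => (¬ kb.inOmega a ∧ a ∈ I) ∨
      (kb.inOmega a ∧ kb.totTheory I ⊨ᵇ kb.toSent a)
  | .fol φ => kb.totTheory I ⊨ᵇ φ

/-- `I ⊨_L body(r)`. -/
def satBody (I : Set Atom) (r : Rule L Atom) : Prop :=
  (∀ e ∈ r.pos, kb.sat2 I e) ∧ (∀ e ∈ r.neg, ¬ kb.sat2 I e)

/-- `I` is a model of `KB`: `I` is consistent with `L` and satisfies all
rules of `Π`. -/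
def IsModel (I : Set Atom) : Prop :=
  (kb.totTheory I).IsSatisfiable ∧
    ∀ r ∈ kb.rules, kb.satBody I r → kb.sat2 I (BElem.atom r.head)

/-- Up-to satisfaction `(E, I) ⊨_L e` of a positive body element. -/
def upSat (E I : Set Atom) (e : BElem L Atom) : Prop :=
  ∀ F : Set Atom, E ⊆ F → F ⊆ I → kb.sat2 F e

/-- `(E, I) ⊨_L body(r)`. -/
def upBody (E I : Set Atom) (r : Rule L Atom) : Prop :=
  (∀ e ∈ r.pos, kb.upSat E I e) ∧
    (∀ e ∈ r.neg, ∀ F : Set Atom, E ⊆ F → F ⊆ I → ¬ kb.sat2 F e)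

/-- `𝒯_KB(E, I) = {head(r) | r ∈ Π, (E, I) ⊨_L body(r)}`. -/
def TcOp (E I : Set Atom) : Set Atom :=
  {H | ∃ r ∈ kb.rules, r.head = H ∧ kb.upBody E I r}

/-- `𝒯^α_KB(∅, I)`: the least fixpoint of `𝒯_KB(·, I)`. -/
def Talpha (I : Set Atom) : Set Atom := sInf {E | kb.TcOp E I ⊆ E}

/-- The theory `L ∪ 𝒯^α_KB(∅, I)|_Ω ∪ ¬.Ī|_Ω`. -/
def wsTheory (I : Set Atom) : L.Theory :=
  kb.theory ∪ kb.toSent '' {a | a ∈ kb.Talpha I ∧ kb.inOmega a} ∪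
    (fun a => (kb.toSent a).not) '' {a | a ∉ I ∧ kb.inOmega a}

/-- `I` is a well-supported answer set of `KB`. -/
def IsWSAnswerSet (I : Set Atom) : Prop :=
  kb.IsModel I ∧ ∀ a ∈ I, a ∈ kb.Talpha I ∨ kb.wsTheory I ⊨ᵇ kb.toSent a

/-- The sequence `𝒯⁰ = ∅`, `𝒯^{k+1} = 𝒯_KB(𝒯^k, I)`. -/
def Titer (I : Set Atom) : ℕ → Set Atom
  | 0 => ∅
  | n + 1 => kb.TcOp (Titer I n) I

/-- The sequence `W⁰ = ∅`, `W^{k+1} = W_KB(W^k)`. -/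
def Witer : ℕ → Set (Lit Atom)
  | 0 => ∅
  | n + 1 => kb.WOp (Witer n)

/-- The sequence `E₀ = ∅`, `E_i = {H ∈ HB_Π | (𝒯^{i-1}, I) ⊨_L H}`. -/
def Eseq (I : Set Atom) : ℕ → Set Atom
  | 0 => ∅
  | n + 1 => {H | kb.upSat (kb.Titer I n) I (BElem.atom H)}

def UnfoundedAt (I : Set (Lit Atom)) (U : Set Atom) (H : Atom) : Prop :=
  (∀ r ∈ kb.rules, r.head = H →
    (∃ a, BElem.atom a ∈ r.pos ∧ ¬ kb.inOmega a ∧ (Sum.inr a ∈ I ∨ a ∈ U)) ∨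
    (∃ b, BElem.atom b ∈ r.neg ∧ ¬ kb.inOmega b ∧ Sum.inl b ∈ I) ∨
    (∃ φ ∈ kb.folOf r.pos, ∀ S : Set (Lit Atom), LitConsistent S →
      I ∪ Sum.inr '' U ⊆ S → ¬ kb.extTheory S ⊨ᵇ φ) ∨
    (∃ φ ∈ kb.folOf r.neg, kb.extTheory I ⊨ᵇ φ)) ∧
  (∀ S : Set (Lit Atom), LitConsistent S → I ∪ Sum.inr '' U ⊆ S →
    ¬ kb.extTheory S ⊨ᵇ kb.toSent H)

variable {kb}

theorem unfoundedCond_iff {I : Set (Lit Atom)} {U : Set Atom} :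
    kb.UnfoundedCond I U ↔ ∀ H ∈ U, kb.UnfoundedAt I U H :=
  Iff.rfl

/-- Enlarging `U` only weakens the clauses: (i) asks for membership in `U`, while (iii)
and (b) quantify over the consistent supersets of `I ∪ ¬.U`, of which there are fewer. -/
theorem UnfoundedAt.mono {I : Set (Lit Atom)} {U V : Set Atom} {H : Atom} (hUV : U ⊆ V)
    (h : kb.UnfoundedAt I U H) : kb.UnfoundedAt I V H := by
  have hsub : ∀ S : Set (Lit Atom), I ∪ Sum.inr '' V ⊆ S → I ∪ Sum.inr '' U ⊆ S :=
    fun S hS => (Set.union_subset_union_right I (Set.image_mono hUV)).trans hS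
  obtain ⟨hrules, hhead⟩ := h
  refine ⟨fun r hr hrH => ?_, fun S hS hIS => hhead S hS (hsub S hIS)⟩
  rcases hrules r hr hrH with ⟨a, ha, hord, hneg⟩ | hpos | ⟨φ, hφ, hent⟩ | hneg
  · exact Or.inl ⟨a, ha, hord, hneg.imp_right (@hUV a)⟩
  · exact Or.inr (Or.inl hpos)
  · exact Or.inr (Or.inr (Or.inl ⟨φ, hφ, fun S hS hIS => hent S hS (hsub S hIS)⟩))
  · exact Or.inr (Or.inr (Or.inr hneg))

theorem unfoundedCond_sUnion {I : Set (Lit Atom)} {𝒰 : Set (Set Atom)}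
    (h : ∀ U ∈ 𝒰, kb.UnfoundedCond I U) : kb.UnfoundedCond I (⋃₀ 𝒰) := by
  refine unfoundedCond_iff.mpr ?_
  rintro H ⟨U, hU, hH⟩
  exact (unfoundedCond_iff.mp (h U hU) H hH).mono (Set.subset_sUnion_of_mem hU)

theorem UnfoundedCond.union {I : Set (Lit Atom)} {U₁ U₂ : Set Atom}
    (h₁ : kb.UnfoundedCond I U₁) (h₂ : kb.UnfoundedCond I U₂) :
    kb.UnfoundedCond I (U₁ ∪ U₂) := by
  rw [← Set.sUnion_pair]
  exact unfoundedCond_sUnion (by rintro U (rfl | rfl) <;> assumption)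

end KB

/-- If `U₁` and `U₂` are unfounded sets of `KB` relative to `I`,
then so is `U₁ ∪ U₂`. -/
theorem unfounded_union {L : FirstOrder.Language} {Atom : Type*}
    (kb : KB L Atom) (I : Set (Lit Atom)) (U₁ U₂ : Set Atom)
    (h₁ : kb.IsUnfounded I U₁) (h₂ : kb.IsUnfounded I U₂) :
    kb.IsUnfounded I (U₁ ∪ U₂) := by
  rcases h₁ with ⟨hI, hU₁⟩ | ⟨hI, rfl⟩
  · rcases h₂ with ⟨-, hU₂⟩ | ⟨hI', -⟩
    · exact Or.inl ⟨hI, hU₁.union hU₂⟩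
    · exact absurd hI hI'
  · exact Or.inr ⟨hI, Set.univ_union _⟩

end FOLProg
end

section
/- Let KB = (L, Π) be an FOL-program. The operator T_KB : 2^{Lit_Π} → 2^{HB_Π} is monotone: for all I₁ ⊆ I₂ ⊆ Lit_Π, T_KB(I₁) ⊆ T_KB(I₂). -/
/-!
Formalization of FOL-programs (combined knowledge bases `KB = (L, Π)` of a
first-order theory and a ground rule base) and their well-founded semantics.

* The Herbrand base `HB_Π` is modelled as a type `Atom`; each atom `a` has an
  associated first-order sentence `toSent a`, and `inOmega a` says whether the
  predicate symbol of `a` is in the shared set `Ω` (atoms with `¬ inOmega a`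
  are the *ordinary* atoms).
* The field `atomic` expresses that atoms are genuinely atomic ground
  sentences: every consistent set of literals is a satisfiable theory.
* Literals `Lit Atom = Atom ⊕ Atom`: `Sum.inl a` is the atom `a`,
  `Sum.inr a` is the negated atom `¬ a`.
-/

open FirstOrder

namespace FOLProg

variable {L : FirstOrder.Language} {Atom : Type*}

/-- Entailment is monotone in the theory. -/
lemma models_mono {L : FirstOrder.Language} {T T' : L.Theory} {n : ℕ} {α : Type}
    {φ : L.BoundedFormula α n} (h : T ⊆ T') (hT : T ⊨ᵇ φ) : T' ⊨ᵇ φ := by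
  intro M v xs
  exact hT ((FirstOrder.Language.Theory.Model.mono M.is_model h).bundled) v xs

lemma restrict_mono {L : FirstOrder.Language} {Atom : Type*} (kb : KB L Atom)
    {I₁ I₂ : Set (Lit Atom)} (h : I₁ ⊆ I₂) : kb.restrict I₁ ⊆ kb.restrict I₂ := by
  apply Set.union_subset_union <;> apply Set.image_mono <;>
    exact fun a ha => ⟨h ha.1, ha.2⟩

lemma extTheory_mono {L : FirstOrder.Language} {Atom : Type*} (kb : KB L Atom)
    {I₁ I₂ : Set (Lit Atom)} (h : I₁ ⊆ I₂) : kb.extTheory I₁ ⊆ kb.extTheory I₂ :=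
  Set.union_subset_union (subset_refl _) (restrict_mono kb h)

lemma consistentWith_mono {L : FirstOrder.Language} {Atom : Type*} (kb : KB L Atom)
    {I₁ I₂ : Set (Lit Atom)} (h : I₁ ⊆ I₂) (hc : kb.ConsistentWith I₂) :
    kb.ConsistentWith I₁ := by
  refine ⟨?_, hc.2.mono (extTheory_mono kb h)⟩
  have : litPos I₁ ∩ litNeg I₁ ⊆ litPos I₂ ∩ litNeg I₂ :=
    Set.inter_subset_inter (fun a ha => h ha) (fun a ha => h ha)
  exact Set.subset_eq_empty (hc.1 ▸ this) rfl

/-- The operator `T_KB` is monotone. -/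
theorem TOp_monotone {L : FirstOrder.Language} {Atom : Type*}
    (kb : KB L Atom) :
    ∀ I₁ I₂ : Set (Lit Atom), I₁ ⊆ I₂ → kb.TOp I₁ ⊆ kb.TOp I₂ := by
  intro I₁ I₂ hI H hH
  by_cases hc2 : kb.ConsistentWith I₂
  · have hc1 : kb.ConsistentWith I₁ := consistentWith_mono kb hI hc2
    rcases hH with h | h | h
    · exact absurd hc1 h
    · obtain ⟨r, hr, hhead, hposo, hnego, hposf, hnegf⟩ := h
      refine Or.inr (Or.inl ⟨r, hr, hhead,
        fun a ha hna => hI (hposo a ha hna),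
        fun a ha hna => hI (hnego a ha hna),
        fun φ hφ => models_mono (extTheory_mono kb hI) (hposf φ hφ),
        fun φ hφ S hS hIS => hnegf φ hφ S hS (hI.trans hIS)⟩)
    · exact Or.inr (Or.inr (models_mono (extTheory_mono kb hI) h))
  · exact Or.inl hc2

end FOLProg
end

section
/- Let KB = (L, Π) be an FOL-program. The operator W_KB : 2^{Lit_Π} → 2^{Lit_Π} defined by W_KB(I) = T_KB(I) ∪ ¬.U_KB(I) ∪ ¬.Z_KB(I) is monotone on the complete lattice (2^{Lit_Π}, ⊆), and hence its least fixpoint lfp(W_KB) (the well-founded semantics of KB) exists. -/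
/-!
Formalization of FOL-programs (combined knowledge bases `KB = (L, Π)` of a
first-order theory and a ground rule base) and their well-founded semantics.

* The Herbrand base `HB_Π` is modelled as a type `Atom`; each atom `a` has an
  associated first-order sentence `toSent a`, and `inOmega a` says whether the
  predicate symbol of `a` is in the shared set `Ω` (atoms with `¬ inOmega a`
  are the *ordinary* atoms).
* The field `atomic` expresses that atoms are genuinely atomic ground
  sentences: every consistent set of literals is a satisfiable theory.
* Literals `Lit Atom = Atom ⊕ Atom`: `Sum.inl a` is the atom `a`,
  `Sum.inr a` is the negated atom `¬ a`.
-/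

open FirstOrder

namespace FOLProg

variable {L : FirstOrder.Language} {Atom : Type*}

/-!
Enlarging `I` can only help every clause that puts an atom into `T_KB(I)`, `U_KB(I)` or
`Z_KB(I)`: entailment from `L ∪ I|_Ω` grows with `I`, a condition over all consistent
`S ⊇ I` ranges over fewer `S`, and once `I ∪ L` becomes inconsistent `T_KB` and `U_KB` jump to
the whole Herbrand base. So `W_KB` is monotone, and Knaster–Tarski gives its least fixpoint.
-/

theorem _root_.FirstOrder.Language.Theory.ModelsBoundedFormula.mono
    {L : FirstOrder.Language} {T T' : L.Theory} {α : Type*} {n : ℕ} {φ : L.BoundedFormula α n}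
    (hφ : T ⊨ᵇ φ) (h : T ⊆ T') : T' ⊨ᵇ φ :=
  fun M v xs => hφ (M.subtheoryModel h) v xs

theorem LitConsistent.subset {S₁ S₂ : Set (Lit Atom)} (hS : LitConsistent S₂) (h : S₁ ⊆ S₂) :
    LitConsistent S₁ :=
  Set.subset_empty_iff.mp <| hS ▸ Set.inter_subset_inter (fun _ ha => h ha) (fun _ ha => h ha)

namespace KB

variable (kb : KB L Atom)

theorem monotone_extTheory : Monotone kb.extTheory := fun _ _ h =>
  Set.union_subset_union_right _ <| Set.union_subset_union
    (Set.image_mono fun _ ha => ⟨h ha.1, ha.2⟩) (Set.image_mono fun _ ha => ⟨h ha.1, ha.2⟩)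

variable {kb} {I₁ I₂ : Set (Lit Atom)}

theorem ConsistentWith.subset (hc : kb.ConsistentWith I₂) (h : I₁ ⊆ I₂) :
    kb.ConsistentWith I₁ :=
  ⟨hc.1.subset h, hc.2.mono (kb.monotone_extTheory h)⟩

theorem UnfoundedCond.mono {U : Set Atom} (hU : kb.UnfoundedCond I₁ U) (h : I₁ ⊆ I₂) :
    kb.UnfoundedCond I₂ U := by
  have hext : I₁ ∪ Sum.inr '' U ⊆ I₂ ∪ Sum.inr '' U := Set.union_subset_union_left _ h
  intro H hH
  obtain ⟨hrules, hhead⟩ := hU H hH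
  refine ⟨fun r hr hrH => ?_, fun S hS hsub => hhead S hS (hext.trans hsub)⟩
  rcases hrules r hr hrH with ⟨a, ha, hord, hneg | hmem⟩ | ⟨b, hb, hord, hpos⟩ |
      ⟨φ, hφ, hnot⟩ | ⟨φ, hφ, hent⟩
  · exact Or.inl ⟨a, ha, hord, Or.inl (h hneg)⟩
  · exact Or.inl ⟨a, ha, hord, Or.inr hmem⟩
  · exact Or.inr <| Or.inl ⟨b, hb, hord, h hpos⟩
  · exact Or.inr <| Or.inr <| Or.inl ⟨φ, hφ, fun S hS hsub => hnot S hS (hext.trans hsub)⟩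
  · exact Or.inr <| Or.inr <| Or.inr ⟨φ, hφ, hent.mono (kb.monotone_extTheory h)⟩

theorem UOp_eq_univ {I : Set (Lit Atom)} (hc : ¬ kb.ConsistentWith I) : kb.UOp I = Set.univ :=
  Set.eq_univ_of_univ_subset <| Set.subset_sUnion_of_mem <| Or.inr ⟨hc, rfl⟩

variable (kb)

theorem monotone_TOp : Monotone kb.TOp := by
  intro I₁ I₂ h H hH
  rcases hH with hc | ⟨r, hr, hrH, hpos, hneg, hfpos, hfneg⟩ | hent
  · exact Or.inl fun hc₂ => hc (hc₂.subset h)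
  · exact Or.inr <| Or.inl ⟨r, hr, hrH, fun a ha hord => h (hpos a ha hord),
      fun a ha hord => h (hneg a ha hord),
      fun φ hφ => (hfpos φ hφ).mono (kb.monotone_extTheory h),
      fun φ hφ S hS hsub => hfneg φ hφ S hS (h.trans hsub)⟩
  · exact Or.inr <| Or.inr <| hent.mono (kb.monotone_extTheory h)

theorem monotone_UOp : Monotone kb.UOp := by
  intro I₁ I₂ h
  by_cases hc₂ : kb.ConsistentWith I₂
  · rintro a ⟨U, ⟨-, hU⟩ | ⟨hc₁, -⟩, haU⟩
    · exact ⟨U, Or.inl ⟨hc₂, hU.mono h⟩, haU⟩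
    · exact absurd (hc₂.subset h) hc₁
  · exact (UOp_eq_univ hc₂).symm ▸ Set.subset_univ _

theorem monotone_ZOp : Monotone kb.ZOp := fun _ _ h _ ha =>
  ha.mono (kb.monotone_extTheory h)

theorem monotone_WOp : Monotone kb.WOp := fun _ _ h =>
  Set.union_subset_union
    (Set.union_subset_union (Set.image_mono (kb.monotone_TOp h))
      (Set.image_mono (kb.monotone_UOp h)))
    (Set.image_mono (kb.monotone_ZOp h))

end KB

/-- `W_KB` is monotone on the complete lattice `(2^{Lit_Π}, ⊆)`,
hence its least fixpoint (the well-founded semantics of `KB`) exists. -/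
theorem WOp_monotone_lfp_exists {L : FirstOrder.Language} {Atom : Type*}
    (kb : KB L Atom) :
    (∀ I₁ I₂ : Set (Lit Atom), I₁ ⊆ I₂ → kb.WOp I₁ ⊆ kb.WOp I₂) ∧
      ∃ I : Set (Lit Atom), kb.WOp I = I ∧
        ∀ J : Set (Lit Atom), kb.WOp J = J → I ⊆ J := by
  let W : Set (Lit Atom) →o Set (Lit Atom) := ⟨kb.WOp, kb.monotone_WOp⟩
  exact ⟨fun _ _ h => kb.monotone_WOp h, W.lfp, W.map_lfp, fun _ hJ => W.lfp_le_fixed hJ⟩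

end FOLProg
end

section
/- Let KB = (∅, Π) be a normal logic program and S ⊆ Lit_Π a consistent set. Then a set U ⊆ HB_Π is an unfounded set of KB relative to S (in the sense of FOL-programs) if and only if U is an unfounded set of Π with respect to S in the standard sense for normal logic programs. -/
/-!
Formalization of FOL-programs (combined knowledge bases `KB = (L, Π)` of a
first-order theory and a ground rule base) and their well-founded semantics.

* The Herbrand base `HB_Π` is modelled as a type `Atom`; each atom `a` has an
  associated first-order sentence `toSent a`, and `inOmega a` says whether the
  predicate symbol of `a` is in the shared set `Ω` (atoms with `¬ inOmega a`
  are the *ordinary* atoms).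
* The field `atomic` expresses that atoms are genuinely atomic ground
  sentences: every consistent set of literals is a satisfiable theory.
* Literals `Lit Atom = Atom ⊕ Atom`: `Sum.inl a` is the atom `a`,
  `Sum.inr a` is the negated atom `¬ a`.
-/

open FirstOrder

namespace FOLProg

variable {L : FirstOrder.Language} {Atom : Type*}

namespace KB

variable (kb : KB L Atom)

lemma restrict_eq_empty (hΩ : ∀ a, ¬ kb.inOmega a) (S : Set (Lit Atom)) :
    kb.restrict S = ∅ := by
  simp [restrict, hΩ]

lemma extTheory_eq_empty_of_isNormal (hN : kb.IsNormal) (S : Set (Lit Atom)) :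
    kb.extTheory S = ∅ := by
  rw [extTheory, hN.1, kb.restrict_eq_empty hN.2.1, Set.union_empty]

lemma consistentWith_of_isNormal (hN : kb.IsNormal) {S : Set (Lit Atom)}
    (hS : LitConsistent S) : kb.ConsistentWith S :=
  ⟨hS, kb.extTheory_eq_empty_of_isNormal hN S ▸ Language.Theory.isSatisfiable_empty L⟩

lemma isUnfounded_iff_of_consistentWith {I : Set (Lit Atom)} (hI : kb.ConsistentWith I)
    (U : Set Atom) : kb.IsUnfounded I U ↔ kb.UnfoundedCond I U := by
  simp [IsUnfounded, hI]

/-- The singleton theory `{¬H}` is satisfiable by `atomic`, so `H` is not valid. -/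
lemma not_empty_models_toSent (H : Atom) : ¬ (∅ : L.Theory) ⊨ᵇ kb.toSent H := by
  rw [Language.Theory.models_iff_not_satisfiable, Set.empty_union, not_not]
  refine (kb.atomic {Sum.inr H} (by simp [LitConsistent, litPos, litNeg])).mono ?_
  rintro _ rfl
  exact Or.inr ⟨H, rfl, rfl⟩

lemma folOf_eq_empty (hΩ : ∀ a, ¬ kb.inOmega a) {s : Set (BElem L Atom)}
    (hs : ∀ e ∈ s, ∃ a, e = BElem.atom a) : kb.folOf s = ∅ := by
  refine Set.eq_empty_of_forall_notMem ?_
  rintro φ (hφ | ⟨a, ⟨-, ha⟩, -⟩)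
  · obtain ⟨a, ha⟩ := hs _ hφ
    cases ha
  · exact hΩ a ha

/-- With `L = ∅` and `Ω = ∅` there are no FOL-formulas for (iii) and (iv) to range over, and (b)
holds because no atom is entailed by the empty theory. -/
lemma unfoundedCond_iff_stdUnfounded (hN : kb.IsNormal) (I : Set (Lit Atom)) (U : Set Atom) :
    kb.UnfoundedCond I U ↔ kb.StdUnfounded I U := by
  have hΩ := hN.2.1
  have hpos {r} (hr : r ∈ kb.rules) : kb.folOf r.pos = ∅ :=
    kb.folOf_eq_empty hΩ fun e he => hN.2.2 r hr e (Or.inl he)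
  have hneg {r} (hr : r ∈ kb.rules) : kb.folOf r.neg = ∅ :=
    kb.folOf_eq_empty hΩ fun e he => hN.2.2 r hr e (Or.inr he)
  have hb (H : Atom) (S : Set (Lit Atom)) : ¬ kb.extTheory S ⊨ᵇ kb.toSent H :=
    kb.extTheory_eq_empty_of_isNormal hN S ▸ kb.not_empty_models_toSent H
  refine forall₂_congr fun H _ => ?_
  simp +contextual only [hΩ, hb, hpos, hneg, Set.mem_empty_iff_false, not_false_eq_true,
    true_and, false_and, exists_false, or_false, and_true, implies_true]

end KB

/-- For a normal logic program `KB = (∅, Π)` and a consistent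
`S ⊆ Lit_Π`, `U` is an unfounded set of `KB` relative to `S` iff `U` is an
unfounded set of `Π` w.r.t. `S` in the standard sense. -/
theorem normal_unfounded_iff_std {L : FirstOrder.Language} {Atom : Type*}
    (kb : KB L Atom) (hN : kb.IsNormal)
    (S : Set (Lit Atom)) (hS : LitConsistent S) (U : Set Atom) :
    kb.IsUnfounded S U ↔ kb.StdUnfounded S U := by
  rw [kb.isUnfounded_iff_of_consistentWith (kb.consistentWith_of_isNormal hN hS)]
  exact kb.unfoundedCond_iff_stdUnfounded hN S U

end FOLProg
end

section
/- Let KB = (L, Π) be an FOL-program, I a well-supported answer set of KB, and define 𝒯⁰ = ∅, 𝒯^{k+1} = 𝒯_KB(𝒯^k, I), and E_i = {H ∈ HB_Π | (𝒯^{i-1}, I) ⊨_L H} for i ≥ 1 (E₀ = ∅). Then for every i ≥ 0 and every atom H ∈ HB_Π, (𝒯^i, I) ⊨_L H if and only if (E_i ∪ 𝒯^i, I) ⊨_L H. -/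
/-!
Formalization of FOL-programs (combined knowledge bases `KB = (L, Π)` of a
first-order theory and a ground rule base) and their well-founded semantics.

* The Herbrand base `HB_Π` is modelled as a type `Atom`; each atom `a` has an
  associated first-order sentence `toSent a`, and `inOmega a` says whether the
  predicate symbol of `a` is in the shared set `Ω` (atoms with `¬ inOmega a`
  are the *ordinary* atoms).
* The field `atomic` expresses that atoms are genuinely atomic ground
  sentences: every consistent set of literals is a satisfiable theory.
* Literals `Lit Atom = Atom ⊕ Atom`: `Sum.inl a` is the atom `a`,
  `Sum.inr a` is the negated atom `¬ a`.
-/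

open FirstOrder

namespace FOLProg

variable {L : FirstOrder.Language} {Atom : Type*}

section Aux

variable (kb : KB L Atom)

lemma upSat_mono {E E' I : Set Atom} (h : E ⊆ E') {e : BElem L Atom}
    (he : kb.upSat E I e) : kb.upSat E' I e :=
  fun F hEF hFI => he F (h.trans hEF) hFI

lemma Titer_mono (I : Set Atom) (n : ℕ) : kb.Titer I n ⊆ kb.Titer I (n + 1) := by
  induction n with
  | zero => simp [KB.Titer]
  | succ n ih =>
    intro H hH
    obtain ⟨r, hr, hhead, hpos, hneg⟩ := hH
    exact ⟨r, hr, hhead, fun e he => upSat_mono kb ih (hpos e he),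
      fun e he F hEF hFI => hneg e he F (ih.trans hEF) hFI⟩

lemma models_trans {T T' : L.Theory} (h : ∀ ψ ∈ T', T ⊨ᵇ ψ) {φ : L.Sentence}
    (h2 : T' ⊨ᵇ φ) : T ⊨ᵇ φ := by
  rw [Language.Theory.models_sentence_iff] at h2 ⊢
  intro M
  letI : M ⊨ T' := ⟨fun ψ hψ => (h ψ hψ).realize_sentence M⟩
  exact h2 ⟨M⟩

end Aux

/-- For a well-supported answer set `I` of `KB`, for every
`i ≥ 0` and every atom `H ∈ HB_Π`,
`(𝒯^i, I) ⊨_L H` iff `(E_i ∪ 𝒯^i, I) ⊨_L H`. -/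
theorem upSat_Titer_iff_Eseq_union_Titer {L : FirstOrder.Language} {Atom : Type*}
    (kb : KB L Atom) (I : Set Atom) (hI : kb.IsWSAnswerSet I) :
    ∀ (i : ℕ) (H : Atom),
      kb.upSat (kb.Titer I i) I (BElem.atom H) ↔
        kb.upSat (kb.Eseq I i ∪ kb.Titer I i) I (BElem.atom H) := by
  intro i H
  constructor
  · intro h F hF hFI
    exact h F (Set.subset_union_right.trans hF) hFI
  · match i with
    | 0 =>
      intro h F hTF hFI
      exact h F (by simpa [KB.Eseq] using hTF) hFI
    | (n + 1) =>
      intro h F hTF hFI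
      -- all atoms of `E_{n+1}` are satisfied by `F`
      have hTn : kb.Titer I n ⊆ F := (Titer_mono kb I n).trans hTF
      have hTnI : kb.Titer I n ⊆ I := hTn.trans hFI
      have hEsat : ∀ a ∈ kb.Eseq I (n + 1), kb.sat2 F (BElem.atom a) :=
        fun a ha => ha F hTn hFI
      -- `E_{n+1} ⊆ I`
      have hEI : kb.Eseq I (n + 1) ⊆ I := by
        intro a ha
        have hsI : kb.sat2 I (BElem.atom a) := ha I hTnI subset_rfl
        rcases hsI with ⟨_, haI⟩ | ⟨hΩ, hmod⟩
        · exact haI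
        · by_contra haI
          obtain ⟨M⟩ := hI.1.1
          have h1 : (M : Type _) ⊨ kb.toSent a := hmod.realize_sentence M
          have h2 : (M : Type _) ⊨ (kb.toSent a).not :=
            Language.Theory.realize_sentence_of_mem (T := kb.totTheory I)
              (Or.inr ⟨a, ⟨haI, hΩ⟩, rfl⟩)
          exact (Language.Sentence.realize_not (M := M)).1 h2 h1
      set F' : Set Atom := F ∪ kb.Eseq I (n + 1) with hF'
      have hF'I : F' ⊆ I := Set.union_subset hFI hEI
      have hsub : kb.Eseq I (n + 1) ∪ kb.Titer I (n + 1) ⊆ F' :=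
        Set.union_subset (Set.subset_union_right) (hTF.trans Set.subset_union_left)
      have hsatF' : kb.sat2 F' (BElem.atom H) := h F' hsub hF'I
      -- entailment transfer from `totTheory F'` to `totTheory F`
      have htrans : ∀ ψ ∈ kb.totTheory F', kb.totTheory F ⊨ᵇ ψ := by
        rintro ψ ((hψ | ⟨a, ⟨haF', hΩ⟩, rfl⟩) | ⟨a, ⟨haF', hΩ⟩, rfl⟩)
        · exact Language.Theory.models_sentence_of_mem (Or.inl (Or.inl hψ))
        · rcases haF' with haF | haE
          · exact Language.Theory.models_sentence_of_mem (Or.inl (Or.inr ⟨a, ⟨haF, hΩ⟩, rfl⟩))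
          · rcases hEsat a haE with ⟨hnΩ, _⟩ | ⟨_, hm⟩
            · exact absurd hΩ hnΩ
            · exact hm
        · have haF : a ∉ F := fun hx => haF' (Or.inl hx)
          exact Language.Theory.models_sentence_of_mem (Or.inr ⟨a, ⟨haF, hΩ⟩, rfl⟩)
      rcases hsatF' with ⟨hnΩ, hHF'⟩ | ⟨hΩ, hm⟩
      · rcases hHF' with hHF | hHE
        · exact Or.inl ⟨hnΩ, hHF⟩
        · exact hEsat H hHE
      · exact Or.inr ⟨hΩ, models_trans htrans hm⟩


end FOLProg
end
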